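/- Soundness of the axiomatic system: if Γ ⊳ ⟨δ⟩ρ ⊣≺ ⟨γ⟩σ is derivable and ⟨δ'⟩ρ' ⊣▲ ⟨γ'⟩σ' holds for every assumption ⟨δ'⟩ρ' ⊣≺ ⟨γ'⟩σ' in Γ, then ⟨δ⟩ρ ⊣▲ ⟨γ⟩σ. -/

import Mathlib

/-- Session behaviours with checkpoints (recursion-free fragment):
`one` is success, `ext ck br` an external choice (checkpointed when `ck = true`),
`int ck br` an internal choice over conames (checkpointed when `ck = true`). -/
inductive SB : Type
  | one : SB
  | ext : Bool → List (ℕ × SB) → SB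
  | int : Bool → List (ℕ × SB) → SB

namespace SB

/-- Duality: exchange names/conames and external/internal choices, preserving checkpoints. -/
def dual : SB → SB
  | .one => .one
  | .ext c br => .int c (br.attach.map (fun p => (p.1.1, dual p.1.2)))
  | .int c br => .ext c (br.attach.map (fun p => (p.1.1, dual p.1.2)))
decreasing_by
  all_goals
    simp_wf
    cases p with | mk v h =>
      have := List.sizeOf_lt_of_mem h
      cases v; simp_all; omega

/-- Erase all checkpoint markers. -/
def erase : SB → SB
  | .one => .one
  | .ext _ br => .ext false (br.attach.map (fun p => (p.1.1, erase p.1.2)))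
  | .int _ br => .int false (br.attach.map (fun p => (p.1.1, erase p.1.2)))
decreasing_by
  all_goals
    simp_wf
    cases p with | mk v h =>
      have := List.sizeOf_lt_of_mem h
      cases v; simp_all; omega

/-- Names heading the top-level external choice (looking through a checkpoint). -/
def sumacts : SB → Finset ℕ
  | .ext _ br => (br.map Prod.fst).toFinset
  | _ => ∅

/-- Names of the conames heading the top-level internal choice. -/
def oplusacts : SB → Finset ℕ
  | .int _ br => (br.map Prod.fst).toFinset
  | _ => ∅

/-- Does the behaviour start with a checkpoint ▲ ? -/
def hasCk : SB → Bool
  | .ext c _ => c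
  | .int c _ => c
  | .one => false

/-- σ ∈ 𝒮▲ : σ starts with a checkpoint. -/
def Ckpt (s : SB) : Prop := s.hasCk = true

/-- Checkpoint-free behaviours. -/
inductive CkFree : SB → Prop
  | one : CkFree .one
  | ext : ∀ {br}, (∀ p ∈ br, CkFree (Prod.snd p)) → CkFree (.ext false br)
  | int : ∀ {br}, (∀ p ∈ br, CkFree (Prod.snd p)) → CkFree (.int false br)

/-- Well-formed behaviours: all choices are non-empty with pairwise distinct names. -/
inductive WF : SB → Prop
  | one : WF .one
  | ext : ∀ {c br}, br ≠ [] → (br.map Prod.fst).Nodup →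
      (∀ p ∈ br, WF (Prod.snd p)) → WF (.ext c br)
  | int : ∀ {c br}, br ≠ [] → (br.map Prod.fst).Nodup →
      (∀ p ∈ br, WF (Prod.snd p)) → WF (.int c br)

end SB

/-- Action labels: names and conames. -/
inductive Lab : Type
  | name (a : ℕ)
  | coname (a : ℕ)

/-- The LTS on configurations ⟨γ⟩σ, where the past γ is `none` (= ∘) or `some` behaviour.
Rules (+), (⊕) and (▲) of the paper. -/
inductive Step : Option SB → SB → Lab → Option SB → SB → Prop
  | ext {γ a s br} : (a, s) ∈ br → Step γ (.ext false br) (.name a) γ s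
  | int {γ a s br} : (a, s) ∈ br → Step γ (.int false br) (.coname a) γ s
  | ckExt {γ a s br} : (a, s) ∈ br →
      Step γ (.ext true br) (.name a) (some (.ext true br)) s
  | ckInt {γ a s br} : (a, s) ∈ br →
      Step γ (.int true br) (.coname a) (some (.int true br)) s

/-- The function b(γ, σ): returns σ if it is checkpointed, γ otherwise. -/
def bfun (γ : Option SB) (s : SB) : Option SB := if s.hasCk then some s else γ

/-- Configurations ⟨γ⟩σ. -/
abbrev Config := Option SB × SB

inductive PLab : Type
  | tau
  | rbk

/-- Communication reduction of client/server pairs: τ-synchronisation of dual actions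
(with side condition oplusacts ⊆ sumacts of the partner) and synchronous rollback. -/
inductive PStep : Config → Config → PLab → Config → Config → Prop
  | comL {δ ρ γ σ δ' ρ' γ' σ' a} :
      Step δ ρ (.name a) δ' ρ' → Step γ σ (.coname a) γ' σ' →
      σ.oplusacts ⊆ ρ.sumacts → PStep (δ, ρ) (γ, σ) .tau (δ', ρ') (γ', σ')
  | comR {δ ρ γ σ δ' ρ' γ' σ' a} :
      Step δ ρ (.coname a) δ' ρ' → Step γ σ (.name a) γ' σ' →
      ρ.oplusacts ⊆ σ.sumacts → PStep (δ, ρ) (γ, σ) .tau (δ', ρ') (γ', σ')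
  | rbk {d ρ g σ} : PStep (some d, ρ) (some g, σ) .rbk (none, d) (none, g)

/-- The functional H whose greatest fixed point is checkpoint compliance. -/
def Hfun (R : Config → Config → Prop) (p q : Config) : Prop :=
  ((¬ ∃ p' q', PStep p q .tau p' q') →
      p.2 = .one ∧ ((p.1 = none ∧ q.1 = none) ∨
        (∃ d g, p.1 = some d ∧ q.1 = some g ∧ SB.Ckpt d ∧ SB.Ckpt g)))
  ∧ (∀ β p' q', PStep p q β p' q' → R p' q')

/-- Checkpoint compliance ⊣▲ : the greatest fixed point of H, i.e. the union of all
checkpoint compliance relations R ⊆ H(R). -/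
def CkptCompl (p q : Config) : Prop :=
  ∃ R : Config → Config → Prop, (∀ x y, R x y → Hfun R x y) ∧ R p q

/-- The formal (axiomatic) system for checkpoint compliance, with judgments
Γ ⊳ ⟨δ⟩ρ ⊣≺ ⟨γ⟩σ; rules (Hyp), (Ax), (+·⊕) and (⊕·+). -/
inductive Deriv : List (Config × Config) → Config → Config → Prop
  | hyp {Γ p q} : (p, q) ∈ Γ → Deriv Γ p q
  | axNil {Γ σ} : Deriv Γ (none, .one) (none, σ)
  | axBk {Γ d g σ} : SB.Ckpt d → SB.Ckpt g → Deriv Γ (none, d) (none, g) →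
      Deriv Γ (some d, .one) (some g, σ)
  | extInt {Γ δ γ c₁ c₂ brρ brσ} :
      brσ ≠ [] →
      (∀ a sj, (a, sj) ∈ brσ → ∃ rj, (a, rj) ∈ brρ) →
      (∀ a sj rj, (a, sj) ∈ brσ → (a, rj) ∈ brρ →
        Deriv (((δ, SB.ext c₁ brρ), (γ, SB.int c₂ brσ)) :: Γ)
          (bfun δ (SB.ext c₁ brρ), rj) (bfun γ (SB.int c₂ brσ), sj)) →
      (∀ d g, δ = some d → γ = some g →
        Deriv (((δ, SB.ext c₁ brρ), (γ, SB.int c₂ brσ)) :: Γ) (none, d) (none, g)) →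
      Deriv Γ (δ, SB.ext c₁ brρ) (γ, SB.int c₂ brσ)
  | intExt {Γ δ γ c₁ c₂ brρ brσ} :
      brρ ≠ [] →
      (∀ a ri, (a, ri) ∈ brρ → ∃ si, (a, si) ∈ brσ) →
      (∀ a ri si, (a, ri) ∈ brρ → (a, si) ∈ brσ →
        Deriv (((δ, SB.int c₁ brρ), (γ, SB.ext c₂ brσ)) :: Γ)
          (bfun δ (SB.int c₁ brρ), ri) (bfun γ (SB.ext c₂ brσ), si)) →
      (∀ d g, δ = some d → γ = some g →
        Deriv (((δ, SB.int c₁ brρ), (γ, SB.ext c₂ brσ)) :: Γ) (none, d) (none, g)) →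
      Deriv Γ (δ, SB.int c₁ brρ) (γ, SB.ext c₂ brσ)

/-- Standard (checkpoint-free) session behaviours, with an explicit committed
coname prefix `pre a σ` (= ā.σ) arising after a silent internal choice. -/
inductive PB : Type
  | one : PB
  | ext : List (ℕ × PB) → PB
  | int : List (ℕ × PB) → PB
  | pre : ℕ → PB → PB

/-- Erasure of checkpointed behaviours into standard ones. -/
def SB.toPB : SB → PB
  | .one => .one
  | .ext _ br => .ext (br.attach.map (fun p => (p.1.1, SB.toPB p.1.2)))
  | .int _ br => .int (br.attach.map (fun p => (p.1.1, SB.toPB p.1.2)))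
decreasing_by
  all_goals
    simp_wf
    cases p with | mk v h =>
      have := List.sizeOf_lt_of_mem h
      cases v; simp_all; omega

/-- Standard reduction of client/server pairs: an internal choice silently commits to
a branch, then the committed coname synchronises with a matching external choice. -/
inductive SRed : PB × PB → PB × PB → Prop
  | intL {br σ a s} : (a, s) ∈ br → SRed (.int br, σ) (.pre a s, σ)
  | intR {ρ br a s} : (a, s) ∈ br → SRed (ρ, .int br) (ρ, .pre a s)
  | comL {br a r s} : (a, r) ∈ br → SRed (.ext br, .pre a s) (r, s)
  | comR {br a r s} : (a, s) ∈ br → SRed (.pre a r, .ext br) (r, s)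

/-- A pair is stuck if no standard reduction applies. -/
def StdStuck (p : PB × PB) : Prop := ¬ ∃ q, SRed p q

/-- Standard compliance ρ ⊣ σ : every stuck reduct of ρ ∥ σ has client 1. -/
def StdCompl (ρ σ : PB) : Prop :=
  ∀ p, Relation.ReflTransGen SRed (ρ, σ) p → StdStuck p → p.1 = PB.one

/-!
The judgments derivable from a fixed context `Γ` of compliant pairs form a post-fixed point of
`H` up to `⊣▲`: an assumption of `Γ` is compliant, an axiom leaves no τ-move, and the premises
of `(+·⊕)` and `(⊕·+)` are exactly the configurations reached in one step of the pair. Those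
premises are derived under the extra assumption of the conclusion itself, which can be cut
because the conclusion is derivable from `Γ`. Coinduction then yields `⊣▲`.
-/

namespace Deriv

theorem mono {Γ Γ' : List (Config × Config)} {p q : Config} (h : Deriv Γ p q) (hsub : Γ ⊆ Γ') :
    Deriv Γ' p q := by
  induction h generalizing Γ' with
  | hyp hm => exact hyp (hsub hm)
  | axNil => exact axNil
  | axBk hd hg _ ih => exact axBk hd hg (ih hsub)
  | extInt hne hmatch _ _ ih₁ ih₂ =>
    exact extInt hne hmatch (fun a s r hs hr => ih₁ a s r hs hr (List.cons_subset_cons _ hsub))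
      (fun d g hd hg => ih₂ d g hd hg (List.cons_subset_cons _ hsub))
  | intExt hne hmatch _ _ ih₁ ih₂ =>
    exact intExt hne hmatch (fun a r s hr hs => ih₁ a r s hr hs (List.cons_subset_cons _ hsub))
      (fun d g hd hg => ih₂ d g hd hg (List.cons_subset_cons _ hsub))

theorem forall_mem_cons_of_forall_mem {Γ Δ : List (Config × Config)} {c : Config × Config}
    (hΔ : ∀ x ∈ Δ, Deriv Γ x.1 x.2) : ∀ x ∈ c :: Δ, Deriv (c :: Γ) x.1 x.2 := by
  rintro x (_ | ⟨_, hx⟩)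
  · exact hyp List.mem_cons_self
  · exact (hΔ x hx).mono (List.subset_cons_self _ _)

theorem subst {Γ Δ : List (Config × Config)} {p q : Config} (h : Deriv Δ p q)
    (hΔ : ∀ x ∈ Δ, Deriv Γ x.1 x.2) : Deriv Γ p q := by
  induction h generalizing Γ with
  | hyp hm => exact hΔ _ hm
  | axNil => exact axNil
  | axBk hd hg _ ih => exact axBk hd hg (ih hΔ)
  | extInt hne hmatch _ _ ih₁ ih₂ =>
    exact extInt hne hmatch (fun a s r hs hr => ih₁ a s r hs hr (forall_mem_cons_of_forall_mem hΔ))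
      (fun d g hd hg => ih₂ d g hd hg (forall_mem_cons_of_forall_mem hΔ))
  | intExt hne hmatch _ _ ih₁ ih₂ =>
    exact intExt hne hmatch (fun a r s hr hs => ih₁ a r s hr hs (forall_mem_cons_of_forall_mem hΔ))
      (fun d g hd hg => ih₂ d g hd hg (forall_mem_cons_of_forall_mem hΔ))

theorem cut {Γ : List (Config × Config)} {p q r s : Config} (h : Deriv ((p, q) :: Γ) r s)
    (hpq : Deriv Γ p q) : Deriv Γ r s :=
  h.subst (List.forall_mem_cons.2 ⟨hpq, fun _ hx => hyp hx⟩)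

end Deriv

theorem Step.not_one {δ δ' : Option SB} {l : Lab} {ρ' : SB} : ¬ Step δ .one l δ' ρ' := nofun

theorem step_ext_iff {δ δ' : Option SB} {c : Bool} {br : List (ℕ × SB)} {l : Lab} {ρ' : SB} :
    Step δ (.ext c br) l δ' ρ' ↔
      ∃ a, l = .name a ∧ (a, ρ') ∈ br ∧ δ' = bfun δ (.ext c br) := by
  constructor
  · rintro (⟨hm⟩ | ⟨hm⟩ | ⟨hm⟩ | ⟨hm⟩) <;> exact ⟨_, rfl, hm, by simp [bfun, SB.hasCk]⟩
  · rintro ⟨a, rfl, hm, rfl⟩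
    cases c
    · simpa [bfun, SB.hasCk] using Step.ext hm
    · simpa [bfun, SB.hasCk] using Step.ckExt hm

theorem step_int_iff {δ δ' : Option SB} {c : Bool} {br : List (ℕ × SB)} {l : Lab} {ρ' : SB} :
    Step δ (.int c br) l δ' ρ' ↔
      ∃ a, l = .coname a ∧ (a, ρ') ∈ br ∧ δ' = bfun δ (.int c br) := by
  constructor
  · rintro (⟨hm⟩ | ⟨hm⟩ | ⟨hm⟩ | ⟨hm⟩) <;> exact ⟨_, rfl, hm, by simp [bfun, SB.hasCk]⟩
  · rintro ⟨a, rfl, hm, rfl⟩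
    cases c
    · simpa [bfun, SB.hasCk] using Step.int hm
    · simpa [bfun, SB.hasCk] using Step.ckInt hm

theorem oplusacts_subset_sumacts {c₁ c₂ : Bool} {brρ brσ : List (ℕ × SB)}
    (hmatch : ∀ a s, (a, s) ∈ brσ → ∃ r, (a, r) ∈ brρ) :
    (SB.int c₂ brσ).oplusacts ⊆ (SB.ext c₁ brρ).sumacts := by
  intro a ha
  simp only [SB.oplusacts, SB.sumacts, List.mem_toFinset, List.mem_map] at ha ⊢
  obtain ⟨⟨a, s⟩, hs, rfl⟩ := ha
  obtain ⟨r, hr⟩ := hmatch a s hs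
  exact ⟨(a, r), hr, rfl⟩

section Hfun

variable {R S : Config → Config → Prop}

theorem Hfun.mono {p q : Config} (hRS : ∀ x y, R x y → S x y) (h : Hfun R p q) : Hfun S p q :=
  ⟨h.1, fun β p' q' hs => hRS _ _ (h.2 β p' q' hs)⟩

theorem hfun_axNil {σ : SB} : Hfun R (none, .one) (none, σ) := by
  refine ⟨fun _ => ⟨rfl, .inl ⟨rfl, rfl⟩⟩, fun β p' q' hs => ?_⟩
  cases hs with
  | comL h => exact (Step.not_one h).elim
  | comR h => exact (Step.not_one h).elim

theorem hfun_axBk {d g σ : SB} (hd : d.Ckpt) (hg : g.Ckpt) (hR : R (none, d) (none, g)) :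
    Hfun R (some d, .one) (some g, σ) := by
  refine ⟨fun _ => ⟨rfl, .inr ⟨d, g, rfl, rfl, hd, hg⟩⟩, fun β p' q' hs => ?_⟩
  cases hs with
  | comL h => exact (Step.not_one h).elim
  | comR h => exact (Step.not_one h).elim
  | rbk => exact hR

theorem hfun_extInt {δ γ : Option SB} {c₁ c₂ : Bool} {brρ brσ : List (ℕ × SB)}
    (hne : brσ ≠ []) (hmatch : ∀ a s, (a, s) ∈ brσ → ∃ r, (a, r) ∈ brρ)
    (hbr : ∀ a s r, (a, s) ∈ brσ → (a, r) ∈ brρ →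
      R (bfun δ (.ext c₁ brρ), r) (bfun γ (.int c₂ brσ), s))
    (hrb : ∀ d g, δ = some d → γ = some g → R (none, d) (none, g)) :
    Hfun R (δ, .ext c₁ brρ) (γ, .int c₂ brσ) := by
  refine ⟨fun hstuck => absurd ?_ hstuck, fun β p' q' hs => ?_⟩
  · obtain ⟨⟨a, s⟩, hs⟩ := List.exists_mem_of_ne_nil _ hne
    obtain ⟨r, hr⟩ := hmatch a s hs
    exact ⟨_, _, .comL (step_ext_iff.2 ⟨a, rfl, hr, rfl⟩) (step_int_iff.2 ⟨a, rfl, hs, rfl⟩)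
      (oplusacts_subset_sumacts hmatch)⟩
  cases hs with
  | comL hρ hσ =>
    obtain ⟨a, ⟨⟩, hr, rfl⟩ := step_ext_iff.1 hρ
    obtain ⟨_, ⟨⟩, hs, rfl⟩ := step_int_iff.1 hσ
    exact hbr _ _ _ hs hr
  | comR hρ => obtain ⟨_, ⟨⟩, -⟩ := step_ext_iff.1 hρ
  | rbk => exact hrb _ _ rfl rfl

theorem hfun_intExt {δ γ : Option SB} {c₁ c₂ : Bool} {brρ brσ : List (ℕ × SB)}
    (hne : brρ ≠ []) (hmatch : ∀ a r, (a, r) ∈ brρ → ∃ s, (a, s) ∈ brσ)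
    (hbr : ∀ a r s, (a, r) ∈ brρ → (a, s) ∈ brσ →
      R (bfun δ (.int c₁ brρ), r) (bfun γ (.ext c₂ brσ), s))
    (hrb : ∀ d g, δ = some d → γ = some g → R (none, d) (none, g)) :
    Hfun R (δ, .int c₁ brρ) (γ, .ext c₂ brσ) := by
  refine ⟨fun hstuck => absurd ?_ hstuck, fun β p' q' hs => ?_⟩
  · obtain ⟨⟨a, r⟩, hr⟩ := List.exists_mem_of_ne_nil _ hne
    obtain ⟨s, hs⟩ := hmatch a r hr
    exact ⟨_, _, .comR (step_int_iff.2 ⟨a, rfl, hr, rfl⟩) (step_ext_iff.2 ⟨a, rfl, hs, rfl⟩)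
      (oplusacts_subset_sumacts hmatch)⟩
  cases hs with
  | comL hρ => obtain ⟨_, ⟨⟩, -⟩ := step_int_iff.1 hρ
  | comR hρ hσ =>
    obtain ⟨a, ⟨⟩, hr, rfl⟩ := step_int_iff.1 hρ
    obtain ⟨_, ⟨⟩, hs, rfl⟩ := step_ext_iff.1 hσ
    exact hbr _ _ _ hr hs
  | rbk => exact hrb _ _ rfl rfl

end Hfun

theorem CkptCompl.hfun {p q : Config} (h : CkptCompl p q) : Hfun CkptCompl p q := by
  obtain ⟨R, hR, hpq⟩ := h
  exact (hR p q hpq).mono fun x y hxy => ⟨R, hR, hxy⟩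

theorem CkptCompl.coinduct_upTo {R : Config → Config → Prop} {p q : Config}
    (hR : ∀ x y, R x y → Hfun (fun x y => R x y ∨ CkptCompl x y) x y) (hpq : R p q) :
    CkptCompl p q := by
  refine ⟨fun x y => R x y ∨ CkptCompl x y, ?_, .inl hpq⟩
  rintro x y (hxy | hxy)
  · exact hR x y hxy
  · exact hxy.hfun.mono fun _ _ => .inr

theorem Deriv.hfun {Γ : List (Config × Config)} (hΓ : ∀ r s, (r, s) ∈ Γ → CkptCompl r s)
    {p q : Config} (h : Deriv Γ p q) :
    Hfun (fun x y => Deriv Γ x y ∨ CkptCompl x y) p q := by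
  cases h with
  | hyp hm => exact (hΓ _ _ hm).hfun.mono fun _ _ => .inr
  | axNil => exact hfun_axNil
  | axBk hd hg h => exact hfun_axBk hd hg (.inl h)
  | extInt hne hmatch hbr hrb =>
    have self := Deriv.extInt hne hmatch hbr hrb
    exact hfun_extInt hne hmatch (fun a s r hs hr => .inl ((hbr a s r hs hr).cut self))
      (fun d g hd hg => .inl ((hrb d g hd hg).cut self))
  | intExt hne hmatch hbr hrb =>
    have self := Deriv.intExt hne hmatch hbr hrb
    exact hfun_intExt hne hmatch (fun a r s hr hs => .inl ((hbr a r s hr hs).cut self))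
      (fun d g hd hg => .inl ((hrb d g hd hg).cut self))

/-- soundness of the axiomatic system with respect to ⊣▲. -/
theorem soundness (Γ : List (Config × Config)) (p q : Config)
    (hder : Deriv Γ p q) (hΓ : ∀ r s, (r, s) ∈ Γ → CkptCompl r s) :
    CkptCompl p q :=
  CkptCompl.coinduct_upTo (fun _ _ => Deriv.hfun hΓ) hder
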